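/- For every real s with 1 ≤ s < 2, the value 1 + (2/s)·√(1 − s²/(s+1)²) + (2·arccos(−s/(s+1)) − s + 1)/(s + 1) is the greatest value of the function F(y) = 1 + y + (2/s)·sin((s + (s+1)·y − 1)/2) over y ∈ [(π − s + 1)/(s + 1), (2π − s + 1)/(s + 1)]; the maximum is attained at y = (2·arccos(−s/(s+1)) − s + 1)/(s + 1). (This is the both-explore lower bound on evacuation time for s ∈ [1, 2).) -/

import Mathlib

open Real

/-!
Substituting `t = (s + (s + 1) y - 1) / 2` maps the interval of `y` onto `[π/2, π]` and turns
`F(y)` into `1 + (2t - s + 1)/(s + 1) + (2/s) sin t`. Since `sin` is concave on `[0, π]`, it lies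
below its tangent line at `θ = arccos (-s/(s+1))`, whose slope `cos θ = -s/(s+1)` exactly cancels
the linear part; hence `F` is maximal at `t = θ`, where `sin θ = √(1 - s²/(s+1)²)`.
-/

theorem ConcaveOn.le_add_mul_sub_of_hasDerivAt {S : Set ℝ} {f : ℝ → ℝ} {f' x y : ℝ}
    (hf : ConcaveOn ℝ S f) (hx : x ∈ S) (hy : y ∈ S) (hf' : HasDerivAt f f' x) :
    f y ≤ f x + f' * (y - x) := by
  rcases lt_trichotomy y x with hyx | rfl | hxy
  · have h := hf.le_slope_of_hasDerivAt hy hx hyx hf'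
    rw [slope_def_field, le_div_iff₀ (sub_pos.2 hyx)] at h
    linarith
  · simp
  · have h := hf.slope_le_of_hasDerivAt hx hy hxy hf'
    rw [slope_def_field, div_le_iff₀ (sub_pos.2 hxy)] at h
    linarith

theorem Real.sin_le_sin_add_cos_mul_sub {x y : ℝ} (hx : x ∈ Set.Icc 0 π)
    (hy : y ∈ Set.Icc 0 π) :
    sin y ≤ sin x + cos x * (y - x) :=
  strictConcaveOn_sin_Icc.concaveOn.le_add_mul_sub_of_hasDerivAt hx hy (hasDerivAt_sin x)

noncomputable def besLowerBound (s y : ℝ) : ℝ :=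
  1 + y + (2 / s) * sin ((s + (s + 1) * y - 1) / 2)

section

variable {s : ℝ}

theorem besLowerBound_reparam (hs : s + 1 ≠ 0) (t : ℝ) :
    besLowerBound s ((2 * t - s + 1) / (s + 1)) =
      1 + (2 * t - s + 1) / (s + 1) + (2 / s) * sin t := by
  have harg : (s + (s + 1) * ((2 * t - s + 1) / (s + 1)) - 1) / 2 = t := by
    field_simp
    ring
  rw [besLowerBound, harg]

theorem besReparam_mem_Icc_iff (hs : 0 < s + 1) (t : ℝ) :
    (2 * t - s + 1) / (s + 1) ∈ Set.Icc ((π - s + 1) / (s + 1)) ((2 * π - s + 1) / (s + 1)) ↔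
      t ∈ Set.Icc (π / 2) π := by
  simp only [Set.mem_Icc, div_le_div_iff_of_pos_right hs]
  constructor <;> rintro ⟨h₁, h₂⟩ <;> constructor <;> linarith

theorem besLowerBound_le_of_cos_eq (hs : 0 < s) {θ t : ℝ} (hcos : cos θ = -s / (s + 1))
    (hθ : θ ∈ Set.Icc 0 π) (ht : t ∈ Set.Icc 0 π) :
    besLowerBound s ((2 * t - s + 1) / (s + 1)) ≤
      besLowerBound s ((2 * θ - s + 1) / (s + 1)) := by
  have hs' : s + 1 ≠ 0 := by positivity
  have htangent := sin_le_sin_add_cos_mul_sub hθ ht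
  rw [hcos] at htangent
  have hscaled := mul_le_mul_of_nonneg_left htangent (by positivity : (0 : ℝ) ≤ 2 / s)
  have hslope : 2 / s * (-s / (s + 1) * (t - θ)) = -(2 * (t - θ) / (s + 1)) := by
    field_simp
  have hshift :
      (2 * t - s + 1) / (s + 1) - 2 * (t - θ) / (s + 1) = (2 * θ - s + 1) / (s + 1) := by
    ring
  rw [mul_add, hslope] at hscaled
  rw [besLowerBound_reparam hs', besLowerBound_reparam hs']
  linarith

end

theorem bes_lower_bound_small_s_general (s : ℝ) (hs1 : 1 ≤ s) :
    (∀ y ∈ Set.Icc ((Real.pi - s + 1) / (s + 1)) ((2 * Real.pi - s + 1) / (s + 1)),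
      1 + y + (2 / s) * Real.sin ((s + (s + 1) * y - 1) / 2) ≤
        1 + (2 / s) * Real.sqrt (1 - s ^ 2 / (s + 1) ^ 2) +
          (2 * Real.arccos (-s / (s + 1)) - s + 1) / (s + 1)) ∧
    (2 * Real.arccos (-s / (s + 1)) - s + 1) / (s + 1) ∈
      Set.Icc ((Real.pi - s + 1) / (s + 1)) ((2 * Real.pi - s + 1) / (s + 1)) ∧
    1 + (2 * Real.arccos (-s / (s + 1)) - s + 1) / (s + 1) +
        (2 / s) *
          Real.sin ((s + (s + 1) * ((2 * Real.arccos (-s / (s + 1)) - s + 1) / (s + 1)) - 1) / 2) =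
      1 + (2 / s) * Real.sqrt (1 - s ^ 2 / (s + 1) ^ 2) +
        (2 * Real.arccos (-s / (s + 1)) - s + 1) / (s + 1) := by
  have hs : 0 < s := by linarith
  have hs' : 0 < s + 1 := by linarith
  have hx : -s / (s + 1) ∈ Set.Icc (-1) 0 := by
    constructor
    · rw [le_div_iff₀ hs']; linarith
    · exact div_nonpos_of_nonpos_of_nonneg (by linarith) hs'.le
  set θ := arccos (-s / (s + 1))
  have hcos : cos θ = -s / (s + 1) := cos_arccos hx.1 (by linarith [hx.2])
  have hsin : √(1 - s ^ 2 / (s + 1) ^ 2) = sin θ := by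
    rw [sin_arccos, neg_div, neg_sq, div_pow]
  have hθ : θ ∈ Set.Icc (π / 2) π :=
    ⟨arccos_zero ▸ arccos_le_arccos hx.2, arccos_le_pi _⟩
  have hmax : besLowerBound s ((2 * θ - s + 1) / (s + 1)) =
      1 + (2 / s) * √(1 - s ^ 2 / (s + 1) ^ 2) + (2 * θ - s + 1) / (s + 1) := by
    rw [besLowerBound_reparam hs'.ne', hsin]
    ring
  refine ⟨fun y hy => ?_, (besReparam_mem_Icc_iff hs' θ).2 hθ, hmax⟩
  obtain ⟨t, rfl⟩ : ∃ t, y = (2 * t - s + 1) / (s + 1) :=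
    ⟨(s + (s + 1) * y - 1) / 2, by field_simp; ring⟩
  have ht := (besReparam_mem_Icc_iff hs' t).1 hy
  rw [← hmax]
  exact besLowerBound_le_of_cos_eq hs hcos
    ⟨by linarith [pi_pos, hθ.1], hθ.2⟩ ⟨by linarith [pi_pos, ht.1], ht.2⟩

/-- BES lower bound for `1 ≤ s < 2`:
`1 + (2/s)·√(1 − s²/(s+1)²) + (2·arccos(−s/(s+1)) − s + 1)/(s + 1)` is the greatest value of
`F(y) = 1 + y + (2/s)·sin((s + (s+1)·y − 1)/2)` over
`y ∈ [(π − s + 1)/(s + 1), (2π − s + 1)/(s + 1)]`, attained at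
`y = (2·arccos(−s/(s+1)) − s + 1)/(s + 1)`. -/
theorem bes_lower_bound_small_s (s : ℝ) (hs1 : 1 ≤ s) (hs2 : s < 2) :
    (∀ y ∈ Set.Icc ((Real.pi - s + 1) / (s + 1)) ((2 * Real.pi - s + 1) / (s + 1)),
      1 + y + (2 / s) * Real.sin ((s + (s + 1) * y - 1) / 2) ≤
        1 + (2 / s) * Real.sqrt (1 - s ^ 2 / (s + 1) ^ 2) +
          (2 * Real.arccos (-s / (s + 1)) - s + 1) / (s + 1)) ∧
    (2 * Real.arccos (-s / (s + 1)) - s + 1) / (s + 1) ∈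
      Set.Icc ((Real.pi - s + 1) / (s + 1)) ((2 * Real.pi - s + 1) / (s + 1)) ∧
    1 + (2 * Real.arccos (-s / (s + 1)) - s + 1) / (s + 1) +
        (2 / s) *
          Real.sin ((s + (s + 1) * ((2 * Real.arccos (-s / (s + 1)) - s + 1) / (s + 1)) - 1) / 2) =
      1 + (2 / s) * Real.sqrt (1 - s ^ 2 / (s + 1) ^ 2) +
        (2 * Real.arccos (-s / (s + 1)) - s + 1) / (s + 1) :=
  bes_lower_bound_small_s_general s hs1
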